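/- arXiv:1210.0514 — 2 statements merged into one kernel-verified Lean document; each statement's English description precedes it below -/
import Mathlib

section
/- For any graph H, any graph G without isolated vertices, and every positive integer k, γ_rk(G ∘ H) ≤ k·γ_t(G). -/
open Finset

def SimpleGraph.lexProd {α β : Type*} (G : SimpleGraph α) (H : SimpleGraph β) :
    SimpleGraph (α × β) where
  Adj x y := G.Adj x.1 y.1 ∨ (x.1 = y.1 ∧ H.Adj x.2 y.2)
  symm := by
    constructor
    intro x y h
    rcases h with h | ⟨e, h⟩
    · exact Or.inl h.symm
    · exact Or.inr ⟨e.symm, h.symm⟩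
  loopless := by
    constructor
    intro x h
    rcases h with h | ⟨_, h⟩
    · exact G.irrefl h
    · exact H.irrefl h

/-- `f` is a `k`-rainbow dominating function of `G`. -/
def IsRDF {α : Type*} (G : SimpleGraph α) (k : ℕ) (f : α → Finset (Fin k)) : Prop :=
  ∀ v, f v = ∅ → ∀ i : Fin k, ∃ u, G.Adj u v ∧ i ∈ f u

/-- weight of a labeling -/
def rdWeight {α : Type*} [Fintype α] {k : ℕ} (f : α → Finset (Fin k)) : ℕ :=
  ∑ v, (f v).card

/-- the `k`-rainbow domination number -/
noncomputable def rdNum {α : Type*} (G : SimpleGraph α) [Fintype α] (k : ℕ) : ℕ :=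
  sInf {n | ∃ f : α → Finset (Fin k), IsRDF G k f ∧ rdWeight f = n}

/-- `D` is a dominating set of `G` -/
def IsDom {α : Type*} (G : SimpleGraph α) (D : Set α) : Prop :=
  ∀ v, v ∈ D ∨ ∃ u ∈ D, G.Adj u v

/-- `D` is a total dominating set of `G` -/
def IsTotalDom {α : Type*} (G : SimpleGraph α) (D : Set α) : Prop :=
  ∀ v, ∃ u ∈ D, G.Adj u v

/-- the domination number -/
noncomputable def domNum {α : Type*} (G : SimpleGraph α) [Fintype α] : ℕ :=
  sInf {n | ∃ D : Finset α, IsDom G ↑D ∧ D.card = n}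

/-- the total domination number -/
noncomputable def totalDomNum {α : Type*} (G : SimpleGraph α) [Fintype α] : ℕ :=
  sInf {n | ∃ D : Finset α, IsTotalDom G ↑D ∧ D.card = n}

/-- `(A, B)` is a dominating couple of `G` -/
def IsDomCouple {α : Type*} [DecidableEq α] (G : SimpleGraph α) (A B : Finset α) : Prop :=
  Disjoint A B ∧ ∀ x, x ∉ B → ∃ w ∈ A ∪ B, G.Adj w x

/-! If `D` totally dominates `G`, then `D × {b₀}` totally dominates `G ∘ H`, since every `(v, b)`
is adjacent to `(u, b₀)` whenever `u ∈ D` is adjacent to `v`. Giving all `k` colours to each vertex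
of a total dominating set `S` is a `k`-rainbow dominating function of weight `k |S|`. -/

def fullLabelOn {α : Type*} [DecidableEq α] (k : ℕ) (S : Finset α) (v : α) : Finset (Fin k) :=
  if v ∈ S then univ else ∅

theorem rdWeight_fullLabelOn {α : Type*} [Fintype α] [DecidableEq α] (k : ℕ) (S : Finset α) :
    rdWeight (fullLabelOn k S) = k * S.card := by
  simp only [rdWeight, fullLabelOn, apply_ite Finset.card, card_univ, Fintype.card_fin,
    card_empty, sum_ite_mem, univ_inter, sum_const, smul_eq_mul, mul_comm]

theorem IsTotalDom.isRDF_fullLabelOn {α : Type*} [DecidableEq α] {G : SimpleGraph α}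
    {S : Finset α} (hS : IsTotalDom G ↑S) (k : ℕ) : IsRDF G k (fullLabelOn k S) := by
  intro v _ i
  obtain ⟨u, huS, hadj⟩ := hS v
  exact ⟨u, hadj, by simp [fullLabelOn, mem_coe.mp huS]⟩

theorem rdNum_le_rdWeight {α : Type*} [Fintype α] {G : SimpleGraph α} {k : ℕ}
    {f : α → Finset (Fin k)} (hf : IsRDF G k f) : rdNum G k ≤ rdWeight f :=
  Nat.sInf_le ⟨f, hf, rfl⟩

theorem IsTotalDom.rdNum_le {α : Type*} [Fintype α] [DecidableEq α] {G : SimpleGraph α}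
    {S : Finset α} (hS : IsTotalDom G ↑S) (k : ℕ) : rdNum G k ≤ k * S.card :=
  rdWeight_fullLabelOn k S ▸ rdNum_le_rdWeight (hS.isRDF_fullLabelOn k)

theorem exists_isTotalDom_card_eq_totalDomNum {α : Type*} [Fintype α] {G : SimpleGraph α}
    (hG : ∀ v : α, ∃ u, G.Adj u v) :
    ∃ D : Finset α, IsTotalDom G ↑D ∧ D.card = totalDomNum G :=
  Nat.sInf_mem (s := {n | ∃ D : Finset α, IsTotalDom G ↑D ∧ D.card = n})
    ⟨_, univ, fun v => (hG v).imp fun _ hu => ⟨mem_coe.mpr (mem_univ _), hu⟩, rfl⟩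

theorem IsTotalDom.lexProd {α β : Type*} {G : SimpleGraph α} {D : Set α}
    (hD : IsTotalDom G D) (H : SimpleGraph β) (b₀ : β) :
    IsTotalDom (G.lexProd H) (D ×ˢ {b₀}) := by
  intro v
  obtain ⟨u, huD, hadj⟩ := hD v.1
  exact ⟨(u, b₀), ⟨huD, rfl⟩, Or.inl hadj⟩

theorem stmt2_general {α β : Type*} [Fintype α] [Fintype β]
    (G : SimpleGraph α) (H : SimpleGraph β)
    (hG : ∀ v : α, ∃ u, G.Adj u v) (k : ℕ) :
    rdNum (G.lexProd H) k ≤ k * totalDomNum G := by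
  classical
  rcases isEmpty_or_nonempty β with hβ | ⟨⟨b₀⟩⟩
  · have hempty : IsTotalDom (G.lexProd H) ↑(∅ : Finset (α × β)) := fun v => isEmptyElim v.2
    calc rdNum (G.lexProd H) k ≤ k * (∅ : Finset (α × β)).card := hempty.rdNum_le k
      _ ≤ k * totalDomNum G := by simp
  · obtain ⟨D, hD, hcard⟩ := exists_isTotalDom_card_eq_totalDomNum hG
    have hDb : IsTotalDom (G.lexProd H) ↑(D ×ˢ {b₀}) := by
      simpa only [coe_product, coe_singleton] using hD.lexProd H b₀
    calc rdNum (G.lexProd H) k ≤ k * (D ×ˢ {b₀}).card := hDb.rdNum_le k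
      _ = k * totalDomNum G := by rw [card_product, card_singleton, mul_one, hcard]

theorem stmt2 {α β : Type*} [Fintype α] [Fintype β]
    (G : SimpleGraph α) (H : SimpleGraph β)
    (hG : ∀ v : α, ∃ u, G.Adj u v) (k : ℕ) (hk : 0 < k) :
    rdNum (G.lexProd H) k ≤ k * totalDomNum G :=
  stmt2_general G H hG k
end

section
/- For every non-trivial connected graph G, there exists a minimum-weight 2-rainbow dominating function of G ∘ K_2 whose induced partition (V_∅, V_1, V_2, V_{12}) satisfies that both π_G(V_1 ∪ V_{12}) and π_G(V_2 ∪ V_{12}) are dominating sets of G. -/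
/-!
Start from any minimum 2-rainbow dominating function `f` of `G ∘ K₂`. If a vertex `(g, h)` is
labelled `∅`, then for each color `i` some neighbour carries `i`; it lies either in the layer of `g`
or in the layer of a `G`-neighbour of `g`, so `g` is dominated by the projection of color `i`.
The only layers with no `∅` and missing a color are the monochromatic ones `({c}, {c})`;
relabelling each of them as `({1,2}, ∅)` keeps the weight and the rainbow domination (the vertex
labelled `{1,2}` sees everything its layer saw), and afterwards every layer contains `∅` or all
colors, so both projections are dominating.
-/

open Finset

open SimpleGraph

section

variable {α β : Type*}

theorem SimpleGraph.lexProd_adj_fst_of_ne {G : SimpleGraph α} {H : SimpleGraph β} {u v : α × β}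
    (huv : (G.lexProd H).Adj u v) (hne : u.1 ≠ v.1) : G.Adj u.1 v.1 :=
  huv.resolve_right fun h => hne h.1

theorem exists_isRDF_rdWeight_eq_rdNum [Fintype α] (G : SimpleGraph α) (k : ℕ) :
    ∃ f : α → Finset (Fin k), IsRDF G k f ∧ rdWeight f = rdNum G k := by
  have hne : {n | ∃ f : α → Finset (Fin k), IsRDF G k f ∧ rdWeight f = n}.Nonempty :=
    ⟨_, fun _ => univ, fun _ hv i => ((univ_eq_empty_iff.mp hv).false i).elim, rfl⟩
  exact Nat.sInf_mem hne

/-- `π_G(V_i ∪ V_{12})` in the paper's notation. -/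
def colorProj {k : ℕ} (f : α × β → Finset (Fin k)) (i : Fin k) : Set α :=
  {g | ∃ h, i ∈ f (g, h)}

theorem IsRDF.isDom_colorProj {G : SimpleGraph α} {H : SimpleGraph β} {k : ℕ}
    {f : α × β → Finset (Fin k)} (hf : IsRDF (G.lexProd H) k f) (i : Fin k)
    (hlayer : ∀ g, (∃ h, f (g, h) = ∅) ∨ ∃ h, i ∈ f (g, h)) : IsDom G (colorProj f i) := by
  intro g
  rcases hlayer g with ⟨h, hgh⟩ | hi
  · obtain ⟨u, hadj, hi⟩ := hf (g, h) hgh i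
    by_cases hu : u.1 = g
    · exact Or.inl ⟨u.2, by rw [← hu]; exact hi⟩
    · exact Or.inr ⟨u.1, ⟨u.2, hi⟩, lexProd_adj_fst_of_ne hadj hu⟩
  · exact Or.inl hi

section MonoLayers

variable {G : SimpleGraph α} {f : α × Fin 2 → Finset (Fin 2)} {g : α}

def IsMonoLayer (f : α × Fin 2 → Finset (Fin 2)) (g : α) : Prop :=
  f (g, 0) = f (g, 1) ∧ #(f (g, 0)) = 1

open Classical in
noncomputable def mergeMonoLayers (f : α × Fin 2 → Finset (Fin 2)) : α × Fin 2 → Finset (Fin 2) :=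
  fun p => if IsMonoLayer f p.1 then (if p.2 = 0 then univ else ∅) else f p

theorem mergeMonoLayers_zero_of_isMonoLayer (hg : IsMonoLayer f g) :
    mergeMonoLayers f (g, 0) = univ := by
  simp [mergeMonoLayers, hg]

theorem mergeMonoLayers_one_of_isMonoLayer (hg : IsMonoLayer f g) :
    mergeMonoLayers f (g, 1) = ∅ := by
  simp [mergeMonoLayers, hg]

theorem mergeMonoLayers_of_not_isMonoLayer (hg : ¬IsMonoLayer f g) (h : Fin 2) :
    mergeMonoLayers f (g, h) = f (g, h) := by
  simp [mergeMonoLayers, hg]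

theorem rdWeight_mergeMonoLayers [Fintype α] : rdWeight (mergeMonoLayers f) = rdWeight f := by
  unfold rdWeight
  simp only [Fintype.sum_prod_type, Fin.sum_univ_two]
  refine sum_congr rfl fun g _ => ?_
  by_cases hg : IsMonoLayer f g
  · rw [mergeMonoLayers_zero_of_isMonoLayer hg, mergeMonoLayers_one_of_isMonoLayer hg, ← hg.1,
      hg.2]
    rfl
  · rw [mergeMonoLayers_of_not_isMonoLayer hg, mergeMonoLayers_of_not_isMonoLayer hg]

theorem exists_mem_mergeMonoLayers_of_mem {i : Fin 2} {h : Fin 2} (hi : i ∈ f (g, h)) :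
    ∃ h', i ∈ mergeMonoLayers f (g, h') := by
  by_cases hg : IsMonoLayer f g
  · exact ⟨0, by rw [mergeMonoLayers_zero_of_isMonoLayer hg]; exact mem_univ i⟩
  · exact ⟨h, by rw [mergeMonoLayers_of_not_isMonoLayer hg]; exact hi⟩

theorem IsRDF.mergeMonoLayers (hf : IsRDF (G.lexProd ⊤) 2 f) :
    IsRDF (G.lexProd ⊤) 2 (mergeMonoLayers f) := by
  rintro ⟨g, h⟩ hv i
  by_cases hg : IsMonoLayer f g
  · obtain rfl | rfl : h = 0 ∨ h = 1 := by omega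
    · rw [mergeMonoLayers_zero_of_isMonoLayer hg] at hv
      exact absurd hv univ_nonempty.ne_empty
    · exact ⟨(g, 0), Or.inr ⟨rfl, (top_adj 0 1).mpr zero_ne_one⟩,
        by rw [mergeMonoLayers_zero_of_isMonoLayer hg]; exact mem_univ i⟩
  · rw [mergeMonoLayers_of_not_isMonoLayer hg] at hv
    obtain ⟨⟨g', h'⟩, hadj, hi⟩ := hf (g, h) hv i
    by_cases hg' : g' = g
    · subst hg'
      exact ⟨(g', h'), hadj, by rw [mergeMonoLayers_of_not_isMonoLayer hg]; exact hi⟩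
    · obtain ⟨h'', hi''⟩ := exists_mem_mergeMonoLayers_of_mem hi
      have hG : G.Adj g' g := lexProd_adj_fst_of_ne hadj hg'
      exact ⟨(g', h''), Or.inl hG, hi''⟩

theorem Fin.two_finset_eq_erase_of_notMem {s : Finset (Fin 2)} {i : Fin 2} (hs : s.Nonempty)
    (hi : i ∉ s) : s = univ.erase i := by
  revert s i
  decide

theorem isMonoLayer_of_nonempty_of_notMem {i : Fin 2} (hne : ∀ h, (f (g, h)).Nonempty)
    (hi : ∀ h, i ∉ f (g, h)) : IsMonoLayer f g := by
  have hlayer h : f (g, h) = univ.erase i := Fin.two_finset_eq_erase_of_notMem (hne h) (hi h)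
  refine ⟨(hlayer 0).trans (hlayer 1).symm, ?_⟩
  rw [hlayer 0, card_erase_of_mem (mem_univ i)]
  rfl

theorem mergeMonoLayers_layer_empty_or_mem (g : α) (i : Fin 2) :
    (∃ h, mergeMonoLayers f (g, h) = ∅) ∨ ∃ h, i ∈ mergeMonoLayers f (g, h) := by
  by_cases hg : IsMonoLayer f g
  · exact Or.inl ⟨1, mergeMonoLayers_one_of_isMonoLayer hg⟩
  · simp only [mergeMonoLayers_of_not_isMonoLayer hg]
    by_contra! hcon
    exact hg (isMonoLayer_of_nonempty_of_notMem hcon.1 hcon.2)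

end MonoLayers

end

theorem stmt8_general {α : Type*} [Fintype α] (G : SimpleGraph α) :
    ∃ f : α × Fin 2 → Finset (Fin 2),
      IsRDF (G.lexProd (⊤ : SimpleGraph (Fin 2))) 2 f ∧
      rdWeight f = rdNum (G.lexProd (⊤ : SimpleGraph (Fin 2))) 2 ∧
      IsDom G {g : α | ∃ h : Fin 2, (0 : Fin 2) ∈ f (g, h)} ∧
      IsDom G {g : α | ∃ h : Fin 2, (1 : Fin 2) ∈ f (g, h)} := by
  obtain ⟨f, hf, hmin⟩ := exists_isRDF_rdWeight_eq_rdNum (G.lexProd (⊤ : SimpleGraph (Fin 2))) 2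
  have hf' := hf.mergeMonoLayers
  exact ⟨mergeMonoLayers f, hf', rdWeight_mergeMonoLayers.trans hmin,
    hf'.isDom_colorProj 0 fun g => mergeMonoLayers_layer_empty_or_mem g 0,
    hf'.isDom_colorProj 1 fun g => mergeMonoLayers_layer_empty_or_mem g 1⟩

theorem stmt8 {α : Type*} [Fintype α] (G : SimpleGraph α)
    (hGc : G.Connected) (hG : Nontrivial α) :
    ∃ f : α × Fin 2 → Finset (Fin 2),
      IsRDF (G.lexProd (⊤ : SimpleGraph (Fin 2))) 2 f ∧
      rdWeight f = rdNum (G.lexProd (⊤ : SimpleGraph (Fin 2))) 2 ∧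
      IsDom G {g : α | ∃ h : Fin 2, (0 : Fin 2) ∈ f (g, h)} ∧
      IsDom G {g : α | ∃ h : Fin 2, (1 : Fin 2) ∈ f (g, h)} :=
  stmt8_general G
end
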